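/- arXiv:2510.09778 — 3 statements merged into one kernel-verified Lean document; each statement's English description precedes it below -/
import Mathlib

section
/- Every real tensor X of shape n_1 × … × n_d admits an exact Tucker decomposition whose ranks equal the ranks of its unfoldings: setting r_k = rank(X_(k)) for k = 1,…,d, there exist a core tensor G of shape r_1 × … × r_d and factor matrices U_k ∈ ℝ^{n_k × r_k} (which may moreover be chosen with orthonormal columns) such that X = G ×_1 U_1 ×_2 … ×_d U_d. -/
/-! For each mode `k` choose `U k` with orthonormal columns spanning the column space of `X₍ₖ₎`,
so that `P k = U k * (U k)ᵀ` satisfies `P k * X₍ₖ₎ = X₍ₖ₎`. With the core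
`G = X ×₁ (U 1)ᵀ ⋯ ×_d (U d)ᵀ`, the composition law of multilinear products gives
`G ×₁ U 1 ⋯ ×_d U d = X ×₁ P 1 ⋯ ×_d P d`, and applying the `P k` one mode at a time
shows that this is `X`. -/

open scoped BigOperators
open Matrix

/-- A `d`-dimensional real tensor of shape `n 0 × ⋯ × n (d-1)`. -/
abbrev Tensor {d : ℕ} (n : Fin d → ℕ) : Type := (∀ i, Fin (n i)) → ℝ

/-- The mode-`k` unfolding of a tensor: rows indexed by the `k`-th index,
columns indexed by the remaining multi-index. -/
def modeUnfold {d : ℕ} {n : Fin d → ℕ} (X : Tensor n) (k : Fin d) :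
    Matrix (Fin (n k)) (∀ i : {j : Fin d // j ≠ k}, Fin (n i.1)) ℝ :=
  fun a b => X fun i =>
    if h : i = k then Fin.cast (congrArg n h).symm a else b ⟨i, h⟩

/-- The Tucker decomposition `G ×₁ U 1 ×₂ ⋯ ×_d U d` of a core tensor `G` of
shape `r` with factor matrices `U k ∈ ℝ^{n k × r k}`, written entrywise. -/
def tuckerEval {d : ℕ} {n r : Fin d → ℕ} (G : Tensor r)
    (U : ∀ k, Matrix (Fin (n k)) (Fin (r k)) ℝ) : Tensor n :=
  fun i => ∑ j : ∀ k, Fin (r k), (∏ k, U k (i k) (j k)) * G j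

theorem Matrix.exists_orthonormal_column_basis {𝕜 : Type*} [RCLike 𝕜] {m c : Type*}
    [Fintype m] [Fintype c] (A : Matrix m c 𝕜) :
    ∃ U : Matrix m (Fin A.rank) 𝕜, Uᴴ * U = 1 ∧ U * Uᴴ * A = A := by
  classical
  let W : Submodule 𝕜 (EuclideanSpace 𝕜 m) :=
    (LinearMap.range A.mulVecLin).map (WithLp.linearEquiv 2 𝕜 (m → 𝕜)).symm.toLinearMap
  have hW : Module.finrank 𝕜 W = A.rank := LinearEquiv.finrank_map_eq _ _
  let b : OrthonormalBasis (Fin A.rank) 𝕜 W := (stdOrthonormalBasis 𝕜 W).reindex (finCongr hW)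
  refine ⟨Matrix.of fun i j => (b j : EuclideanSpace 𝕜 m) i, ?_, ?_⟩
  · ext j j'
    have hon := orthonormal_iff_ite.mp b.orthonormal j j'
    rw [Submodule.coe_inner, EuclideanSpace.inner_eq_star_dotProduct] at hon
    simpa [Matrix.mul_apply, Matrix.one_apply, dotProduct, mul_comm] using hon
  · ext i a
    have hcol : WithLp.toLp 2 (fun i => A i a) ∈ W :=
      Submodule.mem_map_of_mem ⟨Pi.single a 1, by ext; simp⟩
    have hrepr := congrArg (fun v : W => (v : EuclideanSpace 𝕜 m) i) (b.sum_repr' ⟨_, hcol⟩)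
    simp only [Submodule.coe_inner, EuclideanSpace.inner_eq_star_dotProduct, dotProduct,
      Pi.star_apply, RCLike.star_def, AddSubmonoidClass.coe_finsetSum, SetLike.val_smul,
      WithLp.ofLp_sum, WithLp.ofLp_smul, Finset.sum_apply, Pi.smul_apply, smul_eq_mul] at hrepr
    rw [← hrepr, Matrix.mul_assoc, Matrix.mul_apply]
    refine Finset.sum_congr rfl fun j _ => ?_
    simp only [Matrix.mul_apply, Matrix.of_apply, Matrix.conjTranspose_apply, RCLike.star_def,
      mul_comm (A _ a)]
    exact mul_comm _ _

section Tucker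

variable {d : ℕ} {n : Fin d → ℕ}

theorem tuckerEval_tuckerEval {s r : Fin d → ℕ} (G : Tensor r)
    (B : ∀ k, Matrix (Fin (s k)) (Fin (r k)) ℝ) (A : ∀ k, Matrix (Fin (n k)) (Fin (s k)) ℝ) :
    tuckerEval (tuckerEval G B) A = tuckerEval G fun k => A k * B k := by
  funext i
  simp only [tuckerEval, Matrix.mul_apply, Finset.prod_univ_sum, Fintype.piFinset_univ,
    Finset.sum_mul, Finset.mul_sum, Finset.prod_mul_distrib]
  rw [Finset.sum_comm]
  exact Finset.sum_congr rfl fun l _ => Finset.sum_congr rfl fun j _ => by ring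

theorem tuckerEval_one (X : Tensor n) : tuckerEval X 1 = X := by
  funext i
  rw [tuckerEval, Fintype.sum_eq_single i]
  · simp
  · intro m hm
    obtain ⟨k, hk⟩ := Function.ne_iff.mp hm
    rw [Finset.prod_eq_zero (Finset.mem_univ k) (by simp [Matrix.one_apply_ne' hk]), zero_mul]

theorem tuckerEval_update_one_apply (X : Tensor n) (k : Fin d)
    (A : Matrix (Fin (n k)) (Fin (n k)) ℝ) (i : ∀ j, Fin (n j)) :
    tuckerEval X (Function.update 1 k A) i = ∑ a, A (i k) a * X (Function.update i k a) := by
  refine (Fintype.sum_of_injective _ (Function.update_injective i k) _ _ ?_ ?_).symm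
  · intro m hm
    obtain ⟨j, hjk, hj⟩ : ∃ j ≠ k, m j ≠ i j := by
      by_contra! h
      exact hm ⟨m k, funext fun j => by
        rcases eq_or_ne j k with rfl | hjk
        · simp
        · simp [hjk, h j hjk]⟩
    rw [Finset.prod_eq_zero (Finset.mem_univ j), zero_mul]
    simp [Function.update_of_ne hjk, Matrix.one_apply_ne' hj]
  · intro a
    rw [Fintype.prod_eq_single k fun j hjk => by simp [Function.update_of_ne hjk]]
    simp

theorem modeUnfold_apply_update (X : Tensor n) (k : Fin d)
    (i : ∀ j, Fin (n j)) (a : Fin (n k)) :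
    modeUnfold X k a (fun j => i j.1) = X (Function.update i k a) := by
  refine congrArg X (funext fun j => ?_)
  rcases eq_or_ne j k with rfl | hjk
  · simp
  · simp [hjk]

theorem tuckerEval_update_one_eq_self (X : Tensor n) (k : Fin d)
    {A : Matrix (Fin (n k)) (Fin (n k)) ℝ} (hA : A * modeUnfold X k = modeUnfold X k) :
    tuckerEval X (Function.update 1 k A) = X := by
  funext i
  have hi := congrFun₂ hA (i k) fun j => i j.1
  rw [Matrix.mul_apply, modeUnfold_apply_update, Function.update_eq_self] at hi
  simpa [tuckerEval_update_one_apply, modeUnfold_apply_update] using hi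

theorem tuckerEval_eq_self (X : Tensor n)
    {P : ∀ k, Matrix (Fin (n k)) (Fin (n k)) ℝ} (hP : ∀ k, P k * modeUnfold X k = modeUnfold X k) :
    tuckerEval X P = X := by
  suffices h : ∀ S : Finset (Fin d), tuckerEval X (fun k => if k ∈ S then P k else 1) = X by
    simpa using h Finset.univ
  intro S
  induction S using Finset.induction_on with
  | empty => exact tuckerEval_one X
  | insert k S hk ih =>
    have hsplit : (fun j => if j ∈ insert k S then P j else 1) =
        fun j => (if j ∈ S then P j else 1) *
          Function.update (1 : ∀ j, Matrix (Fin (n j)) (Fin (n j)) ℝ) k (P k) j := by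
      funext j
      rcases eq_or_ne j k with rfl | hjk
      · simp [hk]
      · simp [hjk]
    rw [hsplit, ← tuckerEval_tuckerEval, tuckerEval_update_one_eq_self X k (hP k), ih]

end Tucker

/-- every tensor admits an exact Tucker decomposition with ranks
`r k = rank (X₍ₖ₎)`, whose factors moreover have orthonormal columns. -/
theorem tucker_exists {d : ℕ} {n : Fin d → ℕ} (X : Tensor n) :
    ∃ (G : Tensor (fun k => (modeUnfold X k).rank))
      (U : ∀ k, Matrix (Fin (n k)) (Fin ((modeUnfold X k).rank)) ℝ),
      (∀ k, (U k)ᵀ * U k = 1) ∧ X = tuckerEval G U := by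
  choose U hUU hUA using fun k => (modeUnfold X k).exists_orthonormal_column_basis
  simp only [conjTranspose_eq_transpose_of_trivial] at hUU hUA
  refine ⟨tuckerEval X fun k => (U k)ᵀ, U, hUU, ?_⟩
  rw [tuckerEval_tuckerEval, tuckerEval_eq_self X hUA]
end

section
/- The best approximation with bounded Tucker ranks exists: for any real tensor X of shape n_1 × … × n_d and any rank bounds (r_1,…,r_d), the infimum of ‖X − Z‖_F over the set M_r = { Z of shape n_1 × … × n_d : rank(Z_(k)) ≤ r_k for all k } is attained, i.e. there exists Z* ∈ M_r with ‖X − Z*‖_F = inf_{Z ∈ M_r} ‖X − Z‖_F. -/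
open scoped BigOperators
open Matrix

/-- Frobenius norm of a tensor. -/
noncomputable def frobNorm {d : ℕ} {n : Fin d → ℕ} (X : Tensor n) : ℝ :=
  Real.sqrt (∑ i, X i ^ 2)

/-!
A matrix has rank at most `r` iff all its `(r+1) × (r+1)` minors vanish, so `{A | rank A ≤ r}` is
closed; since unfolding is continuous, the Tucker set `M_r` is closed, and it contains `0`.
The Frobenius distance to `X` is the Euclidean distance, hence continuous and tending to infinity
at infinity, so it attains its infimum on the nonempty closed set `M_r`.
-/

open Filter

namespace Matrix

variable {m n K : Type*} [Finite m] [Fintype n] [Field K]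

theorem exists_linearIndependent_rows_of_le_rank {r : ℕ} (A : Matrix m n K) (h : r ≤ A.rank) :
    ∃ f : Fin r → m, LinearIndependent K (A.submatrix f id).row := by
  obtain ⟨κ, a, ha, hspan, hli⟩ := exists_linearIndependent' K A.row
  have : Finite κ := Finite.of_injective a ha
  cases nonempty_fintype κ
  have hcard : Fintype.card κ = A.rank := by
    rw [rank_eq_finrank_span_row, ← hspan, finrank_span_eq_card hli]
  obtain ⟨e⟩ : Nonempty (Fin r ↪ κ) :=
    Function.Embedding.nonempty_of_card_le (by simpa [hcard])
  exact ⟨a ∘ e, hli.comp e e.injective⟩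

theorem le_rank_iff_exists_det_submatrix_ne_zero {r : ℕ} (A : Matrix m n K) :
    r ≤ A.rank ↔ ∃ (f : Fin r → m) (g : Fin r → n), (A.submatrix f g).det ≠ 0 := by
  constructor
  · intro h
    obtain ⟨f, hf⟩ := A.exists_linearIndependent_rows_of_le_rank h
    have hrank : r ≤ (A.submatrix f id)ᵀ.rank := by
      rw [rank_transpose, hf.rank_matrix, Fintype.card_fin]
    obtain ⟨g, hg⟩ := (A.submatrix f id)ᵀ.exists_linearIndependent_rows_of_le_rank hrank
    have hunit := linearIndependent_rows_iff_isUnit.mp hg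
    rw [isUnit_iff_isUnit_det, ← det_transpose] at hunit
    exact ⟨f, g, hunit.ne_zero⟩
  · rintro ⟨f, g, hdet⟩
    calc r = (A.submatrix f g).rank := by rw [rank_of_det_ne_zero hdet, Fintype.card_fin]
      _ ≤ A.rank := rank_submatrix_le A f g

theorem isClosed_setOf_rank_le [TopologicalSpace K] [IsTopologicalRing K] [T1Space K] (r : ℕ) :
    IsClosed {A : Matrix m n K | A.rank ≤ r} := by
  have hminors : {A : Matrix m n K | A.rank ≤ r} =
      ⋂ (f : Fin (r + 1) → m) (g : Fin (r + 1) → n), {A | (A.submatrix f g).det = 0} := by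
    ext A
    rw [Set.mem_ofPred_eq, ← not_lt, Nat.lt_iff_add_one_le,
      le_rank_iff_exists_det_submatrix_ne_zero]
    simp
  rw [hminors]
  exact isClosed_iInter fun f => isClosed_iInter fun g =>
    isClosed_eq (continuous_id.matrix_submatrix f g).matrix_det continuous_const

end Matrix

theorem IsClosed.exists_isMinOn_of_tendsto_cocompact {β α : Type*} [TopologicalSpace β]
    [LinearOrder α] [TopologicalSpace α] [ClosedIicTopology α] {s : Set β} {f : β → α}
    (hs : IsClosed s) (hne : s.Nonempty) (hf : Continuous f)
    (hlim : Tendsto f (cocompact β) atTop) : ∃ x ∈ s, IsMinOn f s x :=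
  hf.continuousOn.exists_isMinOn' hs hne.some_mem
    ((hlim.eventually_ge_atTop _).filter_mono inf_le_left)

section Tucker

variable {d : ℕ} {n : Fin d → ℕ}

def tuckerSet (n : Fin d → ℕ) (r : Fin d → ℕ) : Set (Tensor n) :=
  {Z | ∀ k, (modeUnfold Z k).rank ≤ r k}

theorem continuous_modeUnfold (k : Fin d) : Continuous fun Z : Tensor n => modeUnfold Z k := by
  unfold modeUnfold
  fun_prop

theorem isClosed_tuckerSet (r : Fin d → ℕ) : IsClosed (tuckerSet n r) := by
  simp only [tuckerSet, Set.ofPred_forall]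
  exact isClosed_iInter fun k => (isClosed_setOf_rank_le (r k)).preimage (continuous_modeUnfold k)

theorem zero_mem_tuckerSet (r : Fin d → ℕ) : (0 : Tensor n) ∈ tuckerSet n r := fun k => by
  rw [show modeUnfold (0 : Tensor n) k = 0 from rfl, rank_zero]
  exact Nat.zero_le _

theorem frobNorm_sub_eq_dist (X Z : Tensor n) :
    frobNorm (X - Z) = dist (WithLp.toLp 2 X : EuclideanSpace ℝ _) (WithLp.toLp 2 Z) := by
  simp [frobNorm, EuclideanSpace.dist_eq, Real.dist_eq, sq_abs]

theorem continuous_frobNorm_sub (X : Tensor n) :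
    Continuous fun Z : Tensor n => frobNorm (X - Z) := by
  simp only [frobNorm_sub_eq_dist]
  exact continuous_const.dist (PiLp.continuous_toLp 2 _)

theorem tendsto_frobNorm_sub_cocompact (X : Tensor n) :
    Tendsto (fun Z : Tensor n => frobNorm (X - Z)) (cocompact _) atTop := by
  simp only [frobNorm_sub_eq_dist]
  exact (tendsto_dist_left_cocompact_atTop _).comp
    (PiLp.homeomorph 2 _).symm.isClosedEmbedding.tendsto_cocompact

end Tucker

/-- the best approximation with Tucker ranks bounded by
`r = (r 1, …, r d)` exists: the infimum of `‖X − Z‖_F` over the set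
`M_r = {Z : rank (Z₍ₖ₎) ≤ r k for all k}` is attained by some `Z* ∈ M_r`. -/
theorem tucker_best_approx_exists {d : ℕ} {n : Fin d → ℕ} (X : Tensor n)
    (r : Fin d → ℕ) :
    ∃ Z : Tensor n, (∀ k, (modeUnfold Z k).rank ≤ r k) ∧
      frobNorm (X - Z) =
        sInf {t : ℝ | ∃ W : Tensor n,
          (∀ k, (modeUnfold W k).rank ≤ r k) ∧ t = frobNorm (X - W)} := by
  obtain ⟨Z, hZ, hmin⟩ := (isClosed_tuckerSet r).exists_isMinOn_of_tendsto_cocompact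
    ⟨0, zero_mem_tuckerSet r⟩ (continuous_frobNorm_sub X) (tendsto_frobNorm_sub_cocompact X)
  have hvalues : {t : ℝ | ∃ W : Tensor n,
      (∀ k, (modeUnfold W k).rank ≤ r k) ∧ t = frobNorm (X - W)} =
      (fun W => frobNorm (X - W)) '' tuckerSet n r := by
    ext t
    simp [tuckerSet, eq_comm]
  refine ⟨Z, hZ, ?_⟩
  rw [hvalues]
  exact (IsLeast.csInf_eq
    ⟨Set.mem_image_of_mem _ hZ, Set.forall_mem_image.2 (isMinOn_iff.1 hmin)⟩).symm
end

section
/- The sequential unfolding ranks are minimal among all exact TT decompositions: if a real tensor A of shape n_1 × … × n_d has an exact TT decomposition with cores of ranks (r_1,…,r_{d−1}), i.e. A(i_1,…,i_d) = Σ_{α_1,…,α_{d−1}} G_1(i_1,α_1) G_2(α_1,i_2,α_2) ⋯ G_d(α_{d−1},i_d), then rank(A^{⟨k⟩}) ≤ r_k for every k = 1,…,d−1. -/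
open scoped BigOperators
open Matrix

/-- The `k`-th sequential unfolding `A⟨k⟩`: rows indexed by the first `k`
indices, columns indexed by the remaining ones. -/
def seqUnfold {d : ℕ} {n : Fin d → ℕ} (A : Tensor n) (k : ℕ) :
    Matrix (∀ i : {j : Fin d // j.val < k}, Fin (n i.1))
      (∀ i : {j : Fin d // ¬ j.val < k}, Fin (n i.1)) ℝ :=
  fun a b => A fun i => if h : i.val < k then a ⟨i, h⟩ else b ⟨i, h⟩

/-- Evaluation of a tensor-train decomposition with (uniform) rank profile
`r : Fin (d+1) → ℕ` and cores `G k ∈ ℝ^{r k × n k × r (k+1)}`; the boundary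
ranks are intended to satisfy `r 0 = r d = 1`, so this is exactly
`A(i₁,…,i_d) = Σ_{α} G₁(i₁,α₁) G₂(α₁,i₂,α₂) ⋯ G_d(α_{d−1},i_d)`. -/
def ttEval {d : ℕ} {n : Fin d → ℕ} (r : Fin (d + 1) → ℕ)
    (G : ∀ k : Fin d, Fin (r k.castSucc) → Fin (n k) → Fin (r k.succ) → ℝ) :
    Tensor n :=
  fun i => ∑ α : ∀ k : Fin (d + 1), Fin (r k),
    ∏ k : Fin d, G k (α k.castSucc) (i k) (α k.succ)

section Aux
variable {d : ℕ} {n : Fin d → ℕ} (r : Fin (d + 1) → ℕ)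
  (G : ∀ k : Fin d, Fin (r k.castSucc) → Fin (n k) → Fin (r k.succ) → ℝ)
  (k : Fin (d + 1))

def glueTT (αL : ∀ j : {j : Fin (d+1) // j.val < k.val}, Fin (r j.1))
    (β : Fin (r k))
    (αR : ∀ j : {j : Fin (d+1) // k.val < j.val}, Fin (r j.1)) :
    ∀ j : Fin (d+1), Fin (r j) := fun j =>
  if h : j.val < k.val then αL ⟨j, h⟩
  else if h' : k.val < j.val then αR ⟨j, h'⟩
  else Fin.cast (congrArg r (Fin.ext (by omega))) β

def glueEquiv :
    (Fin (r k) × (∀ j : {j : Fin (d+1) // j.val < k.val}, Fin (r j.1)) ×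
      (∀ j : {j : Fin (d+1) // k.val < j.val}, Fin (r j.1))) ≃
    (∀ j : Fin (d+1), Fin (r j)) where
  toFun x := glueTT r k x.2.1 x.1 x.2.2
  invFun α := (α k, fun j => α j.1, fun j => α j.1)
  left_inv := by
    rintro ⟨β, αL, αR⟩
    refine Prod.ext ?_ (Prod.ext ?_ ?_)
    · simp only [glueTT]
      rw [dif_neg (by omega), dif_neg (by omega)]
      exact Fin.ext rfl
    · funext j; simp [glueTT, j.2]
    · funext j
      simp only [glueTT]
      rw [dif_neg (by omega), dif_pos j.2]
  right_inv := by
    intro α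
    funext j
    simp only [glueTT]
    split
    · rfl
    · split
      · rfl
      · have hj : k = j := Fin.ext (by omega)
        subst hj
        exact Fin.ext rfl

def ttL : Matrix (∀ i : {j : Fin d // j.val < k.val}, Fin (n i.1)) (Fin (r k)) ℝ :=
  fun a β => ∑ αL : ∀ j : {j : Fin (d+1) // j.val < k.val}, Fin (r j.1),
    ∏ j : {j : Fin d // j.val < k.val},
      G j.1 (αL ⟨j.1.castSucc, by simpa using j.2⟩) (a j)
        (if h : j.1.val + 1 < k.val then αL ⟨j.1.succ, by simpa using h⟩
         else Fin.cast (congrArg r (Fin.ext (by have := j.2; simp; omega))) β)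

def ttR : Matrix (Fin (r k)) (∀ i : {j : Fin d // ¬ j.val < k.val}, Fin (n i.1)) ℝ :=
  fun β b => ∑ αR : ∀ j : {j : Fin (d+1) // k.val < j.val}, Fin (r j.1),
    ∏ j : {j : Fin d // ¬ j.val < k.val},
      G j.1 (if h : k.val < j.1.val then αR ⟨j.1.castSucc, by simpa using h⟩
             else Fin.cast (congrArg r (Fin.ext (by have := j.2; simp; omega))) β)
        (b j)
        (αR ⟨j.1.succ, by have := j.2; simp only [Fin.val_succ]; omega⟩)

theorem seqUnfold_eq_mul :
    seqUnfold (ttEval r G) k.val = ttL r G k * ttR r G k := by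
  funext a b
  simp only [seqUnfold, ttEval, Matrix.mul_apply, ttL, ttR]
  rw [← Equiv.sum_comp (glueEquiv r k)]
  simp only [Fintype.sum_prod_type, Finset.sum_mul, Finset.mul_sum]
  refine Finset.sum_congr rfl fun β _ => ?_
  conv_rhs => rw [Finset.sum_comm]
  refine Finset.sum_congr rfl fun αL _ => ?_
  refine Finset.sum_congr rfl fun αR _ => ?_
  show ∏ j : Fin d, G j (glueTT r k αL β αR j.castSucc) _ (glueTT r k αL β αR j.succ) = _
  rw [← Fintype.prod_subtype_mul_prod_subtype (fun j : Fin d => j.val < k.val)]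
  congr 1
  · refine Finset.prod_congr rfl fun j _ => ?_
    obtain ⟨j, hj⟩ := j
    simp only [glueTT, Fin.coe_castSucc, Fin.val_succ]
    split_ifs <;> first | rfl | omega
  · refine Finset.prod_congr rfl fun j _ => ?_
    obtain ⟨j, hj⟩ := j
    simp only [glueTT, Fin.coe_castSucc, Fin.val_succ]
    split_ifs <;> first | rfl | omega

end Aux

/-- the sequential unfolding ranks are minimal among all exact
TT decompositions: if `A` is represented by a TT decomposition with ranks
`(r 1, …, r (d−1))` (and boundary ranks `r 0 = r d = 1`), then
`rank (A⟨k⟩) ≤ r k` for every `k = 1, …, d−1`. -/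
theorem tt_rank_minimal {d : ℕ} {n : Fin d → ℕ} (A : Tensor n)
    (r : Fin (d + 1) → ℕ) (h0 : r 0 = 1) (hd : r (Fin.last d) = 1)
    (G : ∀ k : Fin d, Fin (r k.castSucc) → Fin (n k) → Fin (r k.succ) → ℝ)
    (h : A = ttEval r G) :
    ∀ k : Fin (d + 1), 1 ≤ k.val → k.val ≤ d - 1 →
      (seqUnfold A k.val).rank ≤ r k := by
  intro k _ _
  rw [h, seqUnfold_eq_mul r G k]
  calc (ttL r G k * ttR r G k).rank ≤ (ttL r G k).rank := Matrix.rank_mul_le_left _ _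
    _ ≤ Fintype.card (Fin (r k)) := Matrix.rank_le_card_width _
    _ = r k := Fintype.card_fin _
end
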